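/- arXiv:1504.07048 — 2 statements merged into one kernel-verified Lean document; each statement's English description precedes it below -/
import Mathlib

section
/- Let (a_{i,j})_{i,j∈ℤ} be an array with real entries and let D_{i,j}^ℓ denote the determinant of the adjacent ℓ×ℓ submatrix at position (i,j), with D_{i,j}^0 = 1. If D_{i,j}^ℓ, D_{i+1,j}^ℓ, D_{i,j+1}^ℓ, D_{i,j}^{ℓ+1}, and D_{i+1,j+1}^{ℓ−1} are all positive, then D_{i+1,j+1}^ℓ is also positive. -/
open Matrix

lemma myMulUpdateColumn {n R : Type*} [Fintype n] [DecidableEq n] [CommRing R]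
    (M N : Matrix n n R) (j : n) (c : n → R) :
    M * (N.updateCol j c) = (M * N).updateCol j (M.mulVec c) := by
  ext r s
  by_cases h : s = j
  · subst h; simp [mul_apply, updateCol_apply, mulVec, dotProduct]
  · simp [mul_apply, updateCol_apply, h]

lemma myDetTwoCols {m : ℕ} {R : Type*} [CommRing R] (u v : Fin (m+2) → R) :
    det (((1 : Matrix (Fin (m+2)) (Fin (m+2)) R).updateCol 0 u).updateCol
        (Fin.last (m+1)) v)
      = u 0 * v (Fin.last (m+1)) - u (Fin.last (m+1)) * v 0 := by
  set L : Fin (m+2) := Fin.last (m+1) with hLdef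
  have hL : (0 : Fin (m+2)) ≠ L := by
    simp [hLdef, Fin.ext_iff]
  have hL' : L ≠ (0 : Fin (m+2)) := Ne.symm hL
  set E : (Fin (m+2) → R) → (Fin (m+2) → R) → Matrix (Fin (m+2)) (Fin (m+2)) R :=
    fun u v => ((1 : Matrix (Fin (m+2)) (Fin (m+2)) R).updateCol 0 u).updateCol L v
    with hE
  have hEapp : ∀ u v r c, E u v r c =
      if c = L then v r else if c = 0 then u r else (1 : Matrix (Fin (m+2)) (Fin (m+2)) R) r c := by
    intro u v r c
    simp [hE, updateCol_apply]
  have hrow0 : ∀ u v, u 0 = 0 → v 0 = 0 → det (E u v) = 0 := by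
    intro u v hu hv
    apply det_eq_zero_of_row_eq_zero 0
    intro c
    rw [hEapp]
    rcases eq_or_ne c L with rfl | hcL
    · simp [hv]
    · rcases eq_or_ne c 0 with rfl | hc0
      · simp [hcL, hu]
      · simp [hcL, hc0, one_apply_ne (Ne.symm hc0)]
  have hrowL : ∀ u v, u L = 0 → v L = 0 → det (E u v) = 0 := by
    intro u v hu hv
    apply det_eq_zero_of_row_eq_zero L
    intro c
    rw [hEapp]
    rcases eq_or_ne c L with rfl | hcL
    · simp [hv]
    · rcases eq_or_ne c 0 with rfl | hc0
      · simp [hcL, hu]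
      · simp [hcL, hc0, one_apply_ne (Ne.symm hcL)]
  have hid : det (E (Pi.single 0 1) (Pi.single L 1)) = 1 := by
    have : E (Pi.single 0 1) (Pi.single L 1) = 1 := by
      ext r c
      rw [hEapp]
      rcases eq_or_ne c L with rfl | hcL
      · rw [if_pos rfl, Pi.single_apply, one_apply]
      · rcases eq_or_ne c 0 with rfl | hc0
        · rw [if_neg hcL, if_pos rfl, Pi.single_apply, one_apply]
        · rw [if_neg hcL, if_neg hc0]
    rw [this, det_one]
  have hswap : det (E (Pi.single L 1) (Pi.single 0 1)) = -1 := by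
    have hmat : E (Pi.single L 1) (Pi.single 0 1)
        = (1 : Matrix (Fin (m+2)) (Fin (m+2)) R).submatrix (Equiv.swap 0 L) id := by
      ext r c
      rw [hEapp]
      have hsw : ∀ c' : Fin (m+2),
          (1 : Matrix (Fin (m+2)) (Fin (m+2)) R) (Equiv.swap 0 L r) c'
            = if r = Equiv.swap 0 L c' then 1 else 0 := by
        intro c'
        rw [one_apply]
        congr 1
        rw [eq_iff_iff]
        constructor
        · intro h; rw [← h, Equiv.swap_apply_self]
        · intro h; rw [h, Equiv.swap_apply_self]
      simp only [submatrix_apply, id_eq, hsw]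
      rcases eq_or_ne c L with rfl | hcL
      · rw [if_pos rfl]
        simp [Equiv.swap_apply_right, Pi.single_apply]
      · rcases eq_or_ne c 0 with rfl | hc0
        · rw [if_neg hcL, if_pos rfl]
          simp [Equiv.swap_apply_left, Pi.single_apply]
        · rw [if_neg hcL, if_neg hc0]
          simp [Equiv.swap_apply_of_ne_of_ne hc0 hcL, one_apply]
    rw [hmat, det_permute, Equiv.Perm.sign_swap hL, det_one]
    simp
  have hsplit : ∀ (M : Matrix (Fin (m+2)) (Fin (m+2)) R) (jc : Fin (m+2))
      (x y z : Fin (m+2) → R) (s t : R),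
      det (M.updateCol jc (x + (s • y + t • z))) =
        det (M.updateCol jc x) + s * det (M.updateCol jc y)
          + t * det (M.updateCol jc z) := by
    intro M jc x y z s t
    rw [det_updateCol_add, det_updateCol_add, det_updateCol_smul,
      det_updateCol_smul]
    ring
  -- linearity in the outer (L) column
  have hlinv : ∀ u v : Fin (m+2) → R, det (E u v)
      = det (E u (fun k => v k - v 0 * (Pi.single 0 1 : Fin (m+2) → R) k
            - v L * (Pi.single L 1 : Fin (m+2) → R) k))
        + v 0 * det (E u (Pi.single 0 1)) + v L * det (E u (Pi.single L 1)) := by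
    intro u v
    have hv : v = (fun k => v k - v 0 * (Pi.single 0 1 : Fin (m+2) → R) k
          - v L * (Pi.single L 1 : Fin (m+2) → R) k)
        + (v 0 • (Pi.single 0 1 : Fin (m+2) → R) + v L • (Pi.single L 1 : Fin (m+2) → R)) := by
      funext k
      simp only [Pi.add_apply, Pi.smul_apply, smul_eq_mul]
      ring
    have h := hsplit ((1 : Matrix (Fin (m+2)) (Fin (m+2)) R).updateCol 0 u) L
      (fun k => v k - v 0 * (Pi.single 0 1 : Fin (m+2) → R) k
          - v L * (Pi.single L 1 : Fin (m+2) → R) k)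
      (Pi.single 0 1) (Pi.single L 1) (v 0) (v L)
    rw [← hv] at h
    exact h
  -- swapped update order
  have hcomm : ∀ u v : Fin (m+2) → R,
      E u v = ((1 : Matrix (Fin (m+2)) (Fin (m+2)) R).updateCol L v).updateCol 0 u := by
    intro u v
    ext r c
    rw [hEapp]
    rcases eq_or_ne c L with rfl | hcL
    · simp [updateCol_apply, hL']
    · rcases eq_or_ne c 0 with rfl | hc0
      · simp [updateCol_apply, hcL]
      · simp [updateCol_apply, hcL, hc0]
  have hlinu : ∀ u v : Fin (m+2) → R, det (E u v)
      = det (E (fun k => u k - u 0 * (Pi.single 0 1 : Fin (m+2) → R) k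
            - u L * (Pi.single L 1 : Fin (m+2) → R) k) v)
        + u 0 * det (E (Pi.single 0 1 : Fin (m+2) → R) v) + u L * det (E (Pi.single L 1 : Fin (m+2) → R) v) := by
    intro u v
    have hu : u = (fun k => u k - u 0 * (Pi.single 0 1 : Fin (m+2) → R) k
          - u L * (Pi.single L 1 : Fin (m+2) → R) k)
        + (u 0 • (Pi.single 0 1 : Fin (m+2) → R) + u L • (Pi.single L 1 : Fin (m+2) → R)) := by
      funext k
      simp only [Pi.add_apply, Pi.smul_apply, smul_eq_mul]
      ring
    have h := hsplit ((1 : Matrix (Fin (m+2)) (Fin (m+2)) R).updateCol L v) 0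
      (fun k => u k - u 0 * (Pi.single 0 1 : Fin (m+2) → R) k
          - u L * (Pi.single L 1 : Fin (m+2) → R) k)
      (Pi.single 0 1) (Pi.single L 1) (u 0) (u L)
    rw [← hu] at h
    simp only [hcomm]
    exact h
  -- evaluate
  have hs00 : (Pi.single 0 1 : Fin (m+2) → R) 0 = 1 := by simp
  have hs0L : (Pi.single 0 1 : Fin (m+2) → R) L = 0 := by
    rw [Pi.single_eq_of_ne hL']
  have hsL0 : (Pi.single L 1 : Fin (m+2) → R) 0 = 0 := by
    rw [Pi.single_eq_of_ne hL]
  have hsLL : (Pi.single L 1 : Fin (m+2) → R) L = 1 := by simp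
  rw [hlinv u v]
  set w : Fin (m+2) → R := fun k => v k - v 0 * (Pi.single 0 1 : Fin (m+2) → R) k - v L * (Pi.single L 1 : Fin (m+2) → R) k with hw
  have hw0 : w 0 = 0 := by simp [hw, hs00, hsL0]
  have hwL : w L = 0 := by simp [hw, hs0L, hsLL]
  have t1 : det (E u w) = 0 := by
    rw [hlinu u w]
    rw [hrow0 _ _ (by simp [hs00, hsL0]) hw0,
      hrowL (Pi.single 0 1) w hs0L hwL, hrow0 (Pi.single L 1) w hsL0 hw0]
    ring
  have t2 : det (E u (Pi.single 0 1)) = -(u L) := by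
    rw [hlinu u (Pi.single 0 1)]
    rw [hrowL _ _ (by simp [hs0L, hsLL]) hs0L, hrowL (Pi.single 0 1) _ hs0L hs0L, hswap]
    ring
  have t3 : det (E u (Pi.single L 1)) = u 0 := by
    rw [hlinu u (Pi.single L 1)]
    rw [hrow0 _ _ (by simp [hs00, hsL0]) hsL0, hrow0 (Pi.single L 1) _ hsL0 hsL0, hid]
    ring
  rw [t1, t2, t3]
  ring

lemma myUpdateColumnComm {n R : Type*} [DecidableEq n] [CommRing R]
    (X : Matrix n n R) {c d : n} (h : c ≠ d) (u v : n → R) :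
    (X.updateCol c u).updateCol d v = (X.updateCol d v).updateCol c u := by
  ext r s
  rcases eq_or_ne s d with rfl | hsd
  · simp [updateCol_apply, h.symm]
  · rcases eq_or_ne s c with rfl | hsc
    · simp [updateCol_apply, h, hsd]
    · simp [updateCol_apply, hsd, hsc]



/-- The ℓ×ℓ adjacent minor of the real array `a` at position `(i,j)`;
for `ℓ = 0` it is `1` (determinant of the empty matrix). -/
noncomputable def adjMinor (a : ℤ → ℤ → ℝ) (ℓ : ℕ) (i j : ℤ) : ℝ :=
  Matrix.det (Matrix.of fun r s : Fin ℓ => a (i + (r : ℤ)) (j + (s : ℤ)))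

/-- If `D_{i,j}^ℓ, D_{i+1,j}^ℓ, D_{i,j+1}^ℓ, D_{i,j}^{ℓ+1}, D_{i+1,j+1}^{ℓ-1}` are all
positive, then so is `D_{i+1,j+1}^ℓ`. -/
theorem corner_positive (a : ℤ → ℤ → ℝ) (i j : ℤ) (ℓ : ℕ) (hℓ : 1 ≤ ℓ)
    (h1 : 0 < adjMinor a ℓ i j)
    (h2 : 0 < adjMinor a ℓ (i + 1) j)
    (h3 : 0 < adjMinor a ℓ i (j + 1))
    (h4 : 0 < adjMinor a (ℓ + 1) i j)
    (h5 : 0 < adjMinor a (ℓ - 1) (i + 1) (j + 1)) :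
    0 < adjMinor a ℓ (i + 1) (j + 1) := by
  obtain ⟨m, rfl⟩ : ∃ m, ℓ = m + 1 := ⟨ℓ - 1, (Nat.succ_pred_eq_of_pos hℓ).symm⟩
  have h5' : 0 < adjMinor a m (i + 1) (j + 1) := h5
  set M : Matrix (Fin (m+2)) (Fin (m+2)) ℝ :=
    Matrix.of (fun r s : Fin (m+2) => a (i + (r : ℤ)) (j + (s : ℤ))) with hM
  have hdM : adjMinor a (m+1+1) i j = det M := rfl
  have hL0 : (Fin.last (m+1) : Fin (m+2)) ≠ 0 := by simp [Fin.ext_iff]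
  -- the four corner minors of M
  have mss : det (M.submatrix Fin.succ Fin.succ) = adjMinor a (m+1) (i+1) (j+1) := by
    show _ = det (Matrix.of fun r s : Fin (m+1) => a ((i+1) + (r : ℤ)) ((j+1) + (s : ℤ)))
    congr 1
    ext r s
    show a (i + ((Fin.succ r : Fin (m+2)) : ℤ)) (j + ((Fin.succ s : Fin (m+2)) : ℤ)) = _
    have : ∀ t : Fin (m+1), ((Fin.succ t : Fin (m+2)) : ℤ) = (t : ℤ) + 1 := by
      intro t; simp [Fin.val_succ]
    rw [this r, this s]
    simp only [Matrix.of_apply]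
    ring_nf
  have mcc : det (M.submatrix Fin.castSucc Fin.castSucc) = adjMinor a (m+1) i j := by
    show _ = det (Matrix.of fun r s : Fin (m+1) => a (i + (r : ℤ)) (j + (s : ℤ)))
    congr 1
  have msc : det (M.submatrix Fin.succ Fin.castSucc) = adjMinor a (m+1) (i+1) j := by
    show _ = det (Matrix.of fun r s : Fin (m+1) => a ((i+1) + (r : ℤ)) (j + (s : ℤ)))
    congr 1
    ext r s
    show a (i + ((Fin.succ r : Fin (m+2)) : ℤ)) (j + ((Fin.castSucc s : Fin (m+2)) : ℤ))
      = a ((i+1) + (r : ℤ)) (j + ((Fin.castSucc s : Fin (m+2)) : ℤ))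
    have : ((Fin.succ r : Fin (m+2)) : ℤ) = (r : ℤ) + 1 := by simp [Fin.val_succ]
    rw [this]
    ring_nf
  have mcs : det (M.submatrix Fin.castSucc Fin.succ) = adjMinor a (m+1) i (j+1) := by
    show _ = det (Matrix.of fun r s : Fin (m+1) => a (i + (r : ℤ)) ((j+1) + (s : ℤ)))
    congr 1
    ext r s
    show a (i + ((Fin.castSucc r : Fin (m+2)) : ℤ)) (j + ((Fin.succ s : Fin (m+2)) : ℤ))
      = a (i + ((Fin.castSucc r : Fin (m+2)) : ℤ)) ((j+1) + (s : ℤ))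
    have : ((Fin.succ s : Fin (m+2)) : ℤ) = (s : ℤ) + 1 := by simp [Fin.val_succ]
    rw [this]
    ring_nf
  -- adjugate corner entries
  have c00 : adjugate M 0 0 = adjMinor a (m+1) (i+1) (j+1) := by
    rw [adjugate_fin_succ_eq_det_submatrix]
    simpa using mss
  have cLL : adjugate M (Fin.last (m+1)) (Fin.last (m+1)) = adjMinor a (m+1) i j := by
    rw [adjugate_fin_succ_eq_det_submatrix]
    rw [Fin.succAbove_last]
    rw [mcc]
    have : (-1 : ℝ) ^ ((Fin.last (m+1) : Fin (m+2)).val + (Fin.last (m+1) : Fin (m+2)).val) = 1 :=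
      Even.neg_one_pow ⟨(Fin.last (m+1) : Fin (m+2)).val, by ring⟩
    rw [this, one_mul]
  have c0L : adjugate M 0 (Fin.last (m+1)) = (-1 : ℝ)^(m+1) * adjMinor a (m+1) i (j+1) := by
    rw [adjugate_fin_succ_eq_det_submatrix]
    rw [Fin.succAbove_last, Fin.succAbove_zero, mcs]
    norm_num
  have cL0 : adjugate M (Fin.last (m+1)) 0 = (-1 : ℝ)^(m+1) * adjMinor a (m+1) (i+1) j := by
    rw [adjugate_fin_succ_eq_det_submatrix]
    rw [Fin.succAbove_last, Fin.succAbove_zero, msc]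
    norm_num
  -- the matrix with the two distinguished columns replaced by adjugate columns
  set B : Matrix (Fin (m+2)) (Fin (m+2)) ℝ :=
    ((1 : Matrix (Fin (m+2)) (Fin (m+2)) ℝ).updateCol 0
        (fun k => adjugate M k 0)).updateCol (Fin.last (m+1))
        (fun k => adjugate M k (Fin.last (m+1))) with hB
  have hsq : ((-1:ℝ)^(m+1)) * ((-1:ℝ)^(m+1)) = 1 := by
    rw [← pow_add]
    exact Even.neg_one_pow ⟨m+1, by ring⟩
  have hdetB : det B = adjMinor a (m+1) (i+1) (j+1) * adjMinor a (m+1) i j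
      - adjMinor a (m+1) (i+1) j * adjMinor a (m+1) i (j+1) := by
    rw [hB, myDetTwoCols, c00, cLL, cL0, c0L]
    linear_combination (-(adjMinor a (m+1) (i+1) j * adjMinor a (m+1) i (j+1))) * hsq
  -- the column replacement for M * B
  have hcol : ∀ p : Fin (m+2), M.mulVec (fun k => adjugate M k p)
      = det M • (Pi.single p 1 : Fin (m+2) → ℝ) := by
    intro p
    funext r
    have h1 : M.mulVec (fun k => adjugate M k p) r = (M * adjugate M) r p := by
      simp [mulVec, dotProduct, mul_apply]
    rw [h1, mul_adjugate]
    simp [Matrix.smul_apply, Matrix.one_apply, Pi.single_apply, eq_comm]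
  set s0 : Fin (m+2) → ℝ := Pi.single 0 1 with hs0
  set sL : Fin (m+2) → ℝ := Pi.single (Fin.last (m+1)) 1 with hsL
  have hMB : M * B
      = (M.updateCol 0 (det M • s0)).updateCol (Fin.last (m+1)) (det M • sL) := by
    rw [hB, myMulUpdateColumn, myMulUpdateColumn, Matrix.mul_one, hcol, hcol]
  have h0L : (0 : Fin (m+2)) ≠ Fin.last (m+1) := Ne.symm hL0
  set A : Matrix (Fin (m+2)) (Fin (m+2)) ℝ :=
    (M.updateCol 0 s0).updateCol (Fin.last (m+1)) sL with hA
  have hdet2 : det (M * B) = det M * (det M * det A) := by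
    rw [hMB, det_updateCol_smul, myUpdateColumnComm M h0L, det_updateCol_smul,
      ← myUpdateColumnComm M h0L, ← hA]
  -- entries of A
  have hAentry : ∀ r c : Fin (m+2), c ≠ 0 → c ≠ Fin.last (m+1) → A r c = M r c := by
    intro r c hc0 hcL
    rw [hA, updateCol_apply, if_neg hcL, updateCol_apply, if_neg hc0]
  have hAcol0 : ∀ r : Fin (m+2), A r 0 = if r = 0 then 1 else 0 := by
    intro r
    rw [hA, updateCol_apply, if_neg hL0.symm, updateCol_self, hs0, Pi.single_apply]
  have hAcolL : ∀ r : Fin (m+2), A r (Fin.last (m+1)) = if r = Fin.last (m+1) then 1 else 0 := by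
    intro r
    rw [hA, updateCol_self, hsL, Pi.single_apply]
  -- condensation: det A is the inner minor
  have hinner : det A = adjMinor a m (i+1) (j+1) := by
    rw [det_succ_column_zero A]
    rw [Finset.sum_eq_single (0 : Fin (m+2))]
    · rw [hAcol0, if_pos rfl]
      simp only [Fin.val_zero, pow_zero, one_mul, mul_one, Fin.succAbove_zero]
      set A' : Matrix (Fin (m+1)) (Fin (m+1)) ℝ := A.submatrix Fin.succ Fin.succ with hA'
      rw [det_succ_column A' (Fin.last m)]
      rw [Finset.sum_eq_single (Fin.last m)]
      · have hv : A' (Fin.last m) (Fin.last m) = 1 := by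
          rw [hA', submatrix_apply, Fin.succ_last, hAcolL, if_pos rfl]
        rw [hv]
        have hsgn : (-1 : ℝ) ^ ((Fin.last m : Fin (m+1)).val + (Fin.last m : Fin (m+1)).val)
            = 1 := Even.neg_one_pow ⟨(Fin.last m : Fin (m+1)).val, by ring⟩
        rw [hsgn, one_mul, one_mul, Fin.succAbove_last]
        rw [hA', submatrix_submatrix]
        show _ = det (Matrix.of fun r s : Fin m => a ((i+1) + (r : ℤ)) ((j+1) + (s : ℤ)))
        congr 1
        ext r s
        have hne0 : ∀ t : Fin m, (Fin.succ (Fin.castSucc t) : Fin (m+2)) ≠ 0 :=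
          fun t => Fin.succ_ne_zero _
        have hneL : ∀ t : Fin m, (Fin.succ (Fin.castSucc t) : Fin (m+2)) ≠ Fin.last (m+1) := by
          intro t
          rw [Ne, Fin.ext_iff]
          simp only [Fin.val_succ, Fin.coe_castSucc, Fin.val_last]
          omega
        show A (Fin.succ (Fin.castSucc r)) (Fin.succ (Fin.castSucc s)) = _
        rw [hAentry _ _ (hne0 s) (hneL s)]
        have hcast : ∀ t : Fin m, ((Fin.succ (Fin.castSucc t) : Fin (m+2)) : ℤ) = (t : ℤ) + 1 := by
          intro t; simp [Fin.val_succ]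
        show a (i + ((Fin.succ (Fin.castSucc r) : Fin (m+2)) : ℤ))
            (j + ((Fin.succ (Fin.castSucc s) : Fin (m+2)) : ℤ)) = _
        rw [hcast r, hcast s]
        simp only [Matrix.of_apply]
        ring_nf
      · intro b _ hb
        have : A' b (Fin.last m) = 0 := by
          rw [hA', submatrix_apply, Fin.succ_last, hAcolL, if_neg]
          intro h
          exact hb (by
            have := Fin.succ_injective _ (h.trans (Fin.succ_last m).symm)
            exact this)
        rw [this, mul_zero, zero_mul]
      · intro h
        exact absurd (Finset.mem_univ _) h
    · intro b _ hb
      rw [hAcol0, if_neg hb, mul_zero, zero_mul]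
    · intro h
      exact absurd (Finset.mem_univ _) h
  -- put everything together
  have hdMpos : 0 < det M := by rw [← hdM]; exact h4
  have hcancel : det B = det M * adjMinor a m (i+1) (j+1) := by
    have h := (det_mul M B).symm.trans hdet2
    have h' := mul_left_cancel₀ (ne_of_gt hdMpos) h
    rw [h', hinner]
  have key : adjMinor a (m+1) (i+1) (j+1) * adjMinor a (m+1) i j
      - adjMinor a (m+1) (i+1) j * adjMinor a (m+1) i (j+1)
      = det M * adjMinor a m (i+1) (j+1) := by
    rw [← hdetB, hcancel]
  nlinarith [mul_pos hdMpos h5', mul_pos h2 h3, h1, key]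
end

section
/- Let k ≥ 2 and let F = (a_{i,j}) be an SL_k-frieze over the reals (all adjacent k×k minors equal 1, bordered by k−1 diagonals of zeros and diagonals of ones as in the definition). If D_{1,j}^ℓ > 0 for all ℓ = 1,…,k−1 and j = 1,…,n (where n is the height), then D_{i,j}^ℓ > 0 for all i ∈ ℤ, ℓ = 1,…,k−1 and positions j inside the frieze; in particular F is generic, hence tame and periodic. -/
theorem neg_one_pow_mul_self {R : Type*} [Monoid R] [HasDistribNeg R] (m : ℕ) :
    (-1 : R) ^ m * (-1) ^ m = 1 := by
  rw [← pow_add, ← two_mul, pow_mul, neg_one_sq, one_pow]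

namespace Matrix

section Condensation

variable {R : Type*} [CommRing R] {n : ℕ}

theorem det_updateCol_last_updateCol_zero_one (u w : Fin (n + 2) → R) :
    (((1 : Matrix (Fin (n + 2)) (Fin (n + 2)) R).updateCol 0 u).updateCol (Fin.last _) w).det =
      u 0 * w (Fin.last _) - w 0 * u (Fin.last _) := by
  have hlast : Fin.last (n + 1) ≠ 0 := Fin.last_pos.ne'
  let I : Matrix (Fin (n + 2)) (Fin (n + 2)) R := 1
  let U : Matrix (Fin (n + 2)) (Fin 2) R := of fun i => ![u i - I i 0, w i - I i (Fin.last _)]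
  let V : Matrix (Fin 2) (Fin (n + 2)) R := of ![I 0, I (Fin.last _)]
  have hUV : (I.updateCol 0 u).updateCol (Fin.last _) w = 1 + U * V := by
    ext i j
    by_cases h0 : j = 0
    · subst h0; simp [I, U, V, mul_apply, Fin.sum_univ_two, one_apply, hlast.symm]
    by_cases hl : j = Fin.last _
    · subst hl; simp [I, U, V, mul_apply, Fin.sum_univ_two, one_apply]
    simp [I, U, V, mul_apply, Fin.sum_univ_two, one_apply, h0, hl, Ne.symm h0, Ne.symm hl]
  rw [hUV, det_one_add_mul_comm, det_fin_two]
  simp [I, U, V, vecMul, dotProduct, one_apply, hlast, hlast.symm]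

theorem det_eq_mul_det_inner_of_corner_cols (A : Matrix (Fin (n + 2)) (Fin (n + 2)) R)
    (h0 : ∀ i ≠ 0, A i 0 = 0) (hl : ∀ i ≠ Fin.last _, A i (Fin.last _) = 0) :
    A.det = A 0 0 * A (Fin.last _) (Fin.last _) *
      (A.submatrix (Fin.succ ∘ Fin.castSucc) (Fin.succ ∘ Fin.castSucc)).det := by
  have hB : (A.submatrix Fin.succ Fin.succ).det = A (Fin.last _) (Fin.last _) *
      (A.submatrix (Fin.succ ∘ Fin.castSucc) (Fin.succ ∘ Fin.castSucc)).det := by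
    rw [det_succ_column _ (Fin.last n), Fintype.sum_eq_single (Fin.last n)]
    · simp [Fin.succ_last, Fin.succAbove_last, ← two_mul, pow_mul, submatrix_submatrix]
    · intro i hi
      rw [submatrix_apply, Fin.succ_last, hl _ (by simpa [← Fin.succ_last] using hi)]
      ring
  rw [det_succ_column_zero, Fintype.sum_eq_single 0 fun i hi => by simp [h0 i hi],
    Fin.succAbove_zero, hB]
  simp only [Fin.val_zero, pow_zero, one_mul]
  ring

theorem mulVec_adjugate_col (X : Matrix (Fin (n + 2)) (Fin (n + 2)) R) (j : Fin (n + 2)) :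
    X *ᵥ (fun i => adjugate X i j) = Pi.single j X.det := by
  ext i
  have h := congrFun (congrFun (mul_adjugate X) i) j
  simp only [mul_apply, smul_apply, one_apply, smul_eq_mul] at h
  simp [mulVec, dotProduct, h, Pi.single_apply, eq_comm]

theorem det_mul_det_mul_det_inner (X : Matrix (Fin (n + 2)) (Fin (n + 2)) R) :
    X.det * (X.det * (X.submatrix (Fin.succ ∘ Fin.castSucc) (Fin.succ ∘ Fin.castSucc)).det) =
      X.det * (adjugate X 0 0 * adjugate X (Fin.last _) (Fin.last _) -
        adjugate X 0 (Fin.last _) * adjugate X (Fin.last _) 0) := by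
  have hlast : Fin.last (n + 1) ≠ 0 := Fin.last_pos.ne'
  let P := ((1 : Matrix (Fin (n + 2)) (Fin (n + 2)) R).updateCol 0
    (fun i => adjugate X i 0)).updateCol (Fin.last _) (fun i => adjugate X i (Fin.last _))
  have hXP : X * P = (X.updateCol 0 (Pi.single 0 X.det)).updateCol (Fin.last _)
      (Pi.single (Fin.last _) X.det) := by
    simp only [P, mul_updateCol, mul_one, mulVec_adjugate_col]
  have hinner : ((X.updateCol 0 (Pi.single 0 X.det)).updateCol (Fin.last _)
      (Pi.single (Fin.last _) X.det)).submatrix (Fin.succ ∘ Fin.castSucc) (Fin.succ ∘ Fin.castSucc)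
      = X.submatrix (Fin.succ ∘ Fin.castSucc) (Fin.succ ∘ Fin.castSucc) := by
    ext r s
    have h0 : (Fin.succ (Fin.castSucc s)) ≠ 0 := Fin.succ_ne_zero _
    have hl : (Fin.succ (Fin.castSucc s)) ≠ Fin.last _ := by
      simp [Fin.ext_iff]; omega
    simp [h0, hl]
  have key := det_mul X P
  rw [det_updateCol_last_updateCol_zero_one, hXP, det_eq_mul_det_inner_of_corner_cols _
    (fun i hi => by simp [hlast.symm, hi]) (fun i hi => by simp [hi]), hinner] at key
  simpa [hlast, hlast.symm, mul_assoc] using key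

theorem det_mul_det_inner_eq_adjugate (X : Matrix (Fin (n + 2)) (Fin (n + 2)) R) :
    X.det * (X.submatrix (Fin.succ ∘ Fin.castSucc) (Fin.succ ∘ Fin.castSucc)).det =
      adjugate X 0 0 * adjugate X (Fin.last _) (Fin.last _) -
        adjugate X 0 (Fin.last _) * adjugate X (Fin.last _) 0 := by
  let X' := mvPolynomialX (Fin (n + 2)) (Fin (n + 2)) ℤ
  suffices h : X'.det * (X'.submatrix (Fin.succ ∘ Fin.castSucc) (Fin.succ ∘ Fin.castSucc)).det =
      adjugate X' 0 0 * adjugate X' (Fin.last _) (Fin.last _) -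
        adjugate X' 0 (Fin.last _) * adjugate X' (Fin.last _) 0 by
    obtain ⟨f, rfl⟩ : ∃ f : MvPolynomial _ ℤ →+* R, X'.map f = X :=
      ⟨_, mvPolynomialX_mapMatrix_aeval ℤ X⟩
    have hadj (i j) : (X'.map f).adjugate i j = f (X'.adjugate i j) :=
      (congrFun₂ (f.map_adjugate X') i j).symm
    simpa [hadj, f.map_det, ← submatrix_map] using congrArg f h
  exact mul_left_cancel₀ (det_mvPolynomialX_ne_zero _ ℤ) (det_mul_det_mul_det_inner X')

/-- The Desnanot–Jacobi identity (Dodgson condensation). -/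
theorem det_mul_det_inner (X : Matrix (Fin (n + 2)) (Fin (n + 2)) R) :
    X.det * (X.submatrix (Fin.succ ∘ Fin.castSucc) (Fin.succ ∘ Fin.castSucc)).det =
      (X.submatrix Fin.castSucc Fin.castSucc).det * (X.submatrix Fin.succ Fin.succ).det -
      (X.submatrix Fin.castSucc Fin.succ).det * (X.submatrix Fin.succ Fin.castSucc).det := by
  rw [det_mul_det_inner_eq_adjugate]
  simp only [adjugate_fin_succ_eq_det_submatrix, Fin.succAbove_zero, Fin.succAbove_last,
    Fin.val_zero, Fin.val_last, add_zero, zero_add]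
  rw [pow_add, neg_one_pow_mul_self]
  linear_combination -(X.submatrix Fin.castSucc Fin.succ).det *
    (X.submatrix Fin.succ Fin.castSucc).det * neg_one_pow_mul_self (R := R) (n + 1)

end Condensation

section Kernel

variable {A : Type*} [CommRing A] [IsDomain A] {k : ℕ}

theorem eq_zero_of_vecMul_submatrix_succAbove {ι : Type*} (M : Matrix (Fin (k + 1)) ι A)
    (p : Fin (k + 1)) (f : Fin k → ι) (hdet : (M.submatrix p.succAbove f).det ≠ 0)
    {z : Fin (k + 1) → A} (hp : z p = 0) (hz : ∀ s, (z ᵥ* M) (f s) = 0) : z = 0 := by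
  have hrest : z ∘ p.succAbove = 0 := eq_zero_of_vecMul_eq_zero hdet <| funext fun s => by
    simpa [vecMul, dotProduct, Fin.sum_univ_succAbove _ p, hp] using hz s
  funext r
  rcases Fin.eq_self_or_eq_succAbove p r with rfl | ⟨s, rfl⟩
  · exact hp
  · exact congrFun hrest s

theorem vecMul_eq_zero_of_det_eq_zero (M : Matrix (Fin (k + 1)) (Fin (k + 1)) A)
    (hM : M.det = 0) (hdet : (M.submatrix Fin.castSucc Fin.castSucc).det ≠ 0)
    {z : Fin (k + 1) → A} (hz : ∀ s, (z ᵥ* M) (Fin.castSucc s) = 0) : z ᵥ* M = 0 := by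
  rw [← Fin.succAbove_last] at hdet
  obtain ⟨y, hy, hyM⟩ := exists_vecMul_eq_zero_iff.mpr hM
  have hyl : y (Fin.last k) ≠ 0 := fun h =>
    hy (eq_zero_of_vecMul_submatrix_succAbove M _ _ hdet h (by simp [hyM]))
  -- `y` spans the left kernel, so `z` is a multiple of it
  have hzy : y (Fin.last k) • z - z (Fin.last k) • y = 0 :=
    eq_zero_of_vecMul_submatrix_succAbove M _ _ hdet (by simp [mul_comm])
      (fun s => by simp [sub_vecMul, smul_vecMul, hyM, hz])
  have : y (Fin.last k) • (z ᵥ* M) = 0 := by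
    rw [← smul_vecMul, sub_eq_zero.mp hzy, smul_vecMul, hyM, smul_zero]
  exact (smul_eq_zero.mp this).resolve_left hyl

end Kernel

end Matrix

open Submodule

section WindowSpan

variable (K : Type*) {M : Type*} [Field K] [AddCommGroup M] [Module K M]

def windowSpan (f : ℤ → M) (k : ℕ) (i : ℤ) : Submodule K M :=
  span K (Set.range fun t : Fin k => f (i + t))

variable {K}

theorem mem_windowSpan (f : ℤ → M) {k m : ℕ} (hm : m < k) (i : ℤ) :
    f (i + m) ∈ windowSpan K f k i :=
  subset_span ⟨⟨m, hm⟩, rfl⟩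

theorem windowSpan_eq_succ_of_sum_eq_zero {f : ℤ → M} {k : ℕ} {i : ℤ} {lam : Fin (k + 1) → K}
    (h0 : lam 0 ≠ 0) (hk : lam (Fin.last k) ≠ 0) (h : ∑ r, lam r • f (i + r) = 0) :
    windowSpan K f k i = windowSpan K f k (i + 1) := by
  have hhead : f i ∈ windowSpan K f k (i + 1) := by
    rw [Fin.sum_univ_succ, Fin.val_zero, Nat.cast_zero, add_zero, add_eq_zero_iff_eq_neg] at h
    rw [← inv_smul_smul₀ h0 (f i), h]
    refine smul_mem _ _ (neg_mem (sum_mem fun t _ => smul_mem _ _ ?_))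
    simpa [add_assoc, add_comm (1 : ℤ)] using mem_windowSpan f t.isLt (i + 1)
  have hlast : f (i + k) ∈ windowSpan K f k i := by
    rw [Fin.sum_univ_castSucc, Fin.val_last, add_eq_zero_iff_neg_eq] at h
    rw [← inv_smul_smul₀ hk (f (i + k)), ← h]
    exact smul_mem _ _ (neg_mem (sum_mem fun t _ => smul_mem _ _ (mem_windowSpan f t.isLt i)))
  apply le_antisymm <;> refine span_le.mpr ?_ <;> rintro _ ⟨⟨t, ht⟩, rfl⟩
  · rcases t with _ | t
    · simpa using hhead
    · simpa [add_assoc, add_comm (1 : ℤ)] using mem_windowSpan f (by omega : t < k) (i + 1)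
  · by_cases htk : t + 1 = k
    · subst htk; simpa [add_assoc, add_comm (1 : ℤ)] using hlast
    · simpa [add_assoc, add_comm (1 : ℤ)] using mem_windowSpan f (by omega : t + 1 < k) i

theorem windowSpan_eq_of_forall_eq_succ {f : ℤ → M} {k : ℕ}
    (h : ∀ i, windowSpan K f k i = windowSpan K f k (i + 1)) (i j : ℤ) :
    windowSpan K f k i = windowSpan K f k j := by
  have hper : Function.Periodic (windowSpan K f k) 1 := fun i => (h i).symm
  simpa using (hper.zsmul (j - i) i).symm

end WindowSpan

open Matrix

section AdjacentMinors

variable (a : ℤ → ℤ → ℝ)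

def adjBlock (ℓ : ℕ) (i j : ℤ) : Matrix (Fin ℓ) (Fin ℓ) ℝ :=
  of fun r s => a (i + r) (j + s)

def rowBlock (ℓ : ℕ) (i : ℤ) : Matrix (Fin ℓ) ℤ ℝ :=
  of fun r c => a (i + r) c

variable {a}

theorem adjMinor_eq_det (ℓ : ℕ) (i j : ℤ) : adjMinor a ℓ i j = (adjBlock a ℓ i j).det := rfl

theorem rowBlock_submatrix {ℓ ℓ' : ℕ} (f : Fin ℓ → Fin ℓ') (p : ℤ)
    (hf : ∀ r, ((f r : ℕ) : ℤ) = r + p) (i j : ℤ) :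
    (rowBlock a ℓ' i).submatrix f (fun s : Fin ℓ => j + (s : ℤ)) = adjBlock a ℓ (i + p) j := by
  ext r s
  simp only [rowBlock, adjBlock, submatrix_apply, of_apply, hf]
  ring_nf

theorem adjBlock_submatrix {ℓ ℓ' : ℕ} (f g : Fin ℓ → Fin ℓ') (p q : ℤ)
    (hf : ∀ r, ((f r : ℕ) : ℤ) = r + p) (hg : ∀ s, ((g s : ℕ) : ℤ) = s + q) (i j : ℤ) :
    (adjBlock a ℓ' i j).submatrix f g = adjBlock a ℓ (i + p) (j + q) := by
  ext r s
  simp only [adjBlock, submatrix_apply, of_apply, hf, hg]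
  ring_nf

theorem adjMinor_zero (i j : ℤ) : adjMinor a 0 i j = 1 := det_isEmpty

theorem adjMinor_succ_mul_adjMinor_succ (t : ℕ) (i j : ℤ) :
    adjMinor a (t + 1) i j * adjMinor a (t + 1) (i + 1) (j + 1) =
      adjMinor a (t + 2) i j * adjMinor a t (i + 1) (j + 1) +
        adjMinor a (t + 1) i (j + 1) * adjMinor a (t + 1) (i + 1) j := by
  have h := det_mul_det_inner (adjBlock a (t + 2) i j)
  rw [adjBlock_submatrix _ _ 1 1 (by simp) (by simp),
    adjBlock_submatrix _ _ 0 0 (by simp) (by simp), adjBlock_submatrix _ _ 1 1 (by simp) (by simp),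
    adjBlock_submatrix _ _ 0 1 (by simp) (by simp), adjBlock_submatrix _ _ 1 0 (by simp) (by simp)]
    at h
  simp only [adjMinor_eq_det, add_zero] at h ⊢
  linarith

theorem head_ne_zero_of_vecMul_rowBlock_eq_zero {k : ℕ} {i j : ℤ}
    (hdet : adjMinor a k (i + 1) j ≠ 0) {lam : Fin (k + 1) → ℝ} (hlam : lam ≠ 0)
    (h : lam ᵥ* rowBlock a (k + 1) i = 0) : lam 0 ≠ 0 := fun h0 =>
  hlam <| eq_zero_of_vecMul_submatrix_succAbove (rowBlock a (k + 1) i) 0 (fun s => j + s)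
    (by rwa [Fin.succAbove_zero, rowBlock_submatrix _ 1 (by simp)]) h0 (by simp [h])

theorem last_ne_zero_of_vecMul_rowBlock_eq_zero {k : ℕ} {i j : ℤ}
    (hdet : adjMinor a k i j ≠ 0) {lam : Fin (k + 1) → ℝ} (hlam : lam ≠ 0)
    (h : lam ᵥ* rowBlock a (k + 1) i = 0) : lam (Fin.last k) ≠ 0 := fun h0 =>
  hlam <| eq_zero_of_vecMul_submatrix_succAbove (rowBlock a (k + 1) i) _ (fun s => j + s)
    (by rwa [Fin.succAbove_last, rowBlock_submatrix _ 0 (by simp), add_zero]) h0 (by simp [h])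

theorem exists_vecMul_rowBlock_eq_zero_on_Icc {k : ℕ} {i c₀ c₁ : ℤ} (h₀₁ : c₀ ≤ c₁)
    (hsing : ∀ j ∈ Set.Icc c₀ c₁, adjMinor a (k + 1) i j = 0)
    (hreg : ∀ j ∈ Set.Icc c₀ c₁, adjMinor a k i j ≠ 0) :
    ∃ lam ≠ 0, ∀ c ∈ Set.Icc c₀ (c₁ + k), (lam ᵥ* rowBlock a (k + 1) i) c = 0 := by
  obtain ⟨lam, hlam, h₀⟩ := exists_vecMul_eq_zero_iff.mpr (hsing c₀ ⟨le_rfl, h₀₁⟩)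
  have hblock : ∀ j, c₀ ≤ j → j ≤ c₁ → lam ᵥ* adjBlock a (k + 1) i j = 0 := by
    intro j hj
    induction j, hj using Int.leInduction with
    | base => exact fun _ => h₀
    | succ j hj ih =>
      intro hj₁
      refine vecMul_eq_zero_of_det_eq_zero (adjBlock a (k + 1) i (j + 1))
        (hsing _ ⟨by omega, hj₁⟩) ?_ fun s => ?_
      · rw [adjBlock_submatrix _ _ 0 0 (by simp) (by simp), add_zero, add_zero]
        exact hreg _ ⟨by omega, hj₁⟩
      · have h := congrFun (ih (by omega)) s.succ
        simp only [vecMul, dotProduct, adjBlock, of_apply, Fin.val_succ, Fin.val_castSucc,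
          Pi.zero_apply] at h ⊢
        rw [← h]
        push_cast
        ring_nf
  refine ⟨lam, hlam, fun c ⟨hc₀, hc₁⟩ => ?_⟩
  have hs : (c - min c c₁).toNat < k + 1 := by omega
  have h := congrFun (hblock (min c c₁) (by omega) (by omega)) ⟨_, hs⟩
  simp only [vecMul, dotProduct, adjBlock, rowBlock, of_apply, Pi.zero_apply] at h ⊢
  rw [← h]
  congr! 3
  omega

theorem eq_zero_of_mem_windowSpan {k : ℕ} {i j : ℤ} (hdet : adjMinor a k i j ≠ 0) {g : ℤ → ℝ}
    (hg : g ∈ windowSpan ℝ a k i) (hz : ∀ s : Fin k, g (j + s) = 0) : g = 0 := by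
  rw [windowSpan, mem_span_range_iff_exists_fun] at hg
  obtain ⟨c, rfl⟩ := hg
  have hc : c = 0 := eq_zero_of_vecMul_eq_zero hdet <| funext fun s => by
    simpa [vecMul, dotProduct] using hz s
  simp [hc]

end AdjacentMinors

structure IsSLFrieze (k n : ℕ) (a : ℤ → ℤ → ℝ) : Prop where
  apply_self : ∀ i, a i i = 1
  apply_add_height : ∀ i, a i (i + ((n : ℤ) + 1)) = 1
  apply_eq_zero : ∀ i j, i + ((n : ℤ) + 1) < j → j < i + ((n : ℤ) + (k : ℤ) + 1) → a i j = 0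
  apply_add_period : ∀ i j, a i (j + ((n : ℤ) + (k : ℤ) + 1)) = (-1 : ℝ) ^ (k - 1) * a i j
  adjMinor_eq_one : ∀ i j, adjMinor a k i j = 1

/-- The range includes the sizes `0`, `k` and the minors starting on the two diagonals of ones
(`m = 0`, `m = n + 1`), all equal to `1`, so that the condensation induction closes. -/
def RowMinorsPos (a : ℤ → ℤ → ℝ) (k n : ℕ) (i : ℤ) : Prop :=
  ∀ ℓ m : ℕ, ℓ ≤ k → m ≤ n + 1 → 0 < adjMinor a ℓ i (i + m)

namespace IsSLFrieze

variable {k n : ℕ} {a : ℤ → ℤ → ℝ}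

theorem apply_eq_zero_of_lt (hF : IsSLFrieze k n a) {i j : ℤ} (h₁ : j < i) (h₂ : i < j + k) :
    a i j = 0 := by
  have h := hF.apply_add_period i j
  rw [hF.apply_eq_zero i _ (by omega) (by omega)] at h
  exact (mul_eq_zero.mp h.symm).resolve_left (pow_ne_zero _ (by norm_num))

theorem adjMinor_self (hF : IsSLFrieze k n a) {ℓ : ℕ} (hℓ : ℓ ≤ k) (i : ℤ) :
    adjMinor a ℓ i i = 1 := by
  rw [adjMinor_eq_det, det_of_isUpperTriangular]
  · exact Finset.prod_eq_one fun r _ => hF.apply_self _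
  · intro r s (hrs : s < r)
    exact hF.apply_eq_zero_of_lt (by simpa using hrs) (by omega)

theorem adjMinor_add_height (hF : IsSLFrieze k n a) {ℓ : ℕ} (hℓ : ℓ ≤ k) (i : ℤ) :
    adjMinor a ℓ i (i + ((n : ℤ) + 1)) = 1 := by
  rw [adjMinor_eq_det, det_of_isLowerTriangular]
  · refine Finset.prod_eq_one fun r _ => ?_
    simpa [adjBlock, add_right_comm] using hF.apply_add_height (i + r)
  · intro r s (hrs : (r : ℕ) < s)
    exact hF.apply_eq_zero _ _ (by omega) (by omega)

theorem adjMinor_pos_of_boundary (hF : IsSLFrieze k n a) {ℓ m : ℕ} (hℓ : ℓ ≤ k)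
    (h : ℓ = 0 ∨ ℓ = k ∨ m = 0 ∨ m = n + 1) (i : ℤ) : 0 < adjMinor a ℓ i (i + m) := by
  rcases h with rfl | rfl | rfl | rfl
  · simp [adjMinor_zero]
  · simp [hF.adjMinor_eq_one]
  · simp [hF.adjMinor_self hℓ]
  · simp [hF.adjMinor_add_height hℓ]

theorem rowMinorsPos_of_interior (hF : IsSLFrieze k n a) {i : ℤ}
    (h : ∀ ℓ m : ℕ, 1 ≤ ℓ → ℓ ≤ k - 1 → 1 ≤ m → m ≤ n → 0 < adjMinor a ℓ i (i + m)) :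
    RowMinorsPos a k n i := fun ℓ m hℓ hm => by
  by_cases hb : ℓ = 0 ∨ ℓ = k ∨ m = 0 ∨ m = n + 1
  · exact hF.adjMinor_pos_of_boundary hℓ hb i
  · exact h ℓ m (by omega) (by omega) (by omega) (by omega)

theorem rowMinorsPos_succ (hF : IsSLFrieze k n a) {i : ℤ} (h : RowMinorsPos a k n i) :
    RowMinorsPos a k n (i + 1) := by
  intro ℓ
  induction ℓ with
  | zero => exact fun m _ _ => hF.adjMinor_pos_of_boundary (Nat.zero_le k) (.inl rfl) _
  | succ t ihℓ =>
    intro m hℓ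
    induction m with
    | zero => exact fun _ => hF.adjMinor_pos_of_boundary hℓ (.inr (.inr (.inl rfl))) _
    | succ m ihm =>
      intro hm
      by_cases hb : t + 1 = k ∨ m + 1 = n + 1
      · exact hF.adjMinor_pos_of_boundary hℓ (by omega) _
      have key := adjMinor_succ_mul_adjMinor_succ (a := a) t i (i + (m + 1 : ℕ))
      have hA := h (t + 2) (m + 1) (by omega) hm
      have hB := ihℓ (m + 1) (by omega) hm
      have hx := h (t + 1) (m + 1) hℓ hm
      have hE := h (t + 1) (m + 2) hℓ (by omega)
      have hG := ihm (by omega)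
      push_cast at key hA hB hx hE hG ⊢
      rw [show i + 1 + (m + 1 : ℤ) = i + (m + 1) + 1 by ring] at hB ⊢
      rw [show i + 1 + (m : ℤ) = i + (m + 1) by ring] at hG
      rw [show i + (m + 2 : ℤ) = i + (m + 1) + 1 by ring] at hE
      exact pos_of_mul_pos_right (key ▸ by positivity) hx.le

theorem rowMinorsPos_of_succ (hF : IsSLFrieze k n a) {i : ℤ} (h : RowMinorsPos a k n (i + 1)) :
    RowMinorsPos a k n i := by
  suffices ∀ d e ℓ m : ℕ, ℓ + d = k → m + e = n + 1 → 0 < adjMinor a ℓ i (i + m) from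
    fun ℓ m hℓ hm => this (k - ℓ) (n + 1 - m) ℓ m (by omega) (by omega)
  intro d
  induction d with
  | zero => exact fun e ℓ m hℓ _ => hF.adjMinor_pos_of_boundary (by omega) (by omega) i
  | succ d ihd =>
    intro e
    induction e with
    | zero => exact fun ℓ m hℓ hm => hF.adjMinor_pos_of_boundary (by omega) (by omega) i
    | succ e ihe =>
      intro ℓ m hℓ hm
      by_cases hb : ℓ = 0 ∨ m = 0
      · exact hF.adjMinor_pos_of_boundary (by omega) (by omega) i
      obtain ⟨t, rfl⟩ : ∃ t, ℓ = t + 1 := ⟨ℓ - 1, by omega⟩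
      obtain ⟨m, rfl⟩ : ∃ m', m = m' + 1 := ⟨m - 1, by omega⟩
      have key := adjMinor_succ_mul_adjMinor_succ (a := a) t i (i + (m + 1 : ℕ))
      have hA := ihd (e + 1) (t + 2) (m + 1) (by omega) hm
      have hB := h t (m + 1) (by omega) (by omega)
      have hy := h (t + 1) (m + 1) (by omega) (by omega)
      have hE := ihe (t + 1) (m + 2) hℓ (by omega)
      have hG := h (t + 1) m (by omega) (by omega)
      push_cast at key hA hB hy hE hG ⊢
      rw [show i + 1 + (m + 1 : ℤ) = i + (m + 1) + 1 by ring] at hB hy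
      rw [show i + 1 + (m : ℤ) = i + (m + 1) by ring] at hG
      rw [show i + (m + 2 : ℤ) = i + (m + 1) + 1 by ring] at hE
      exact pos_of_mul_pos_left (key ▸ by positivity) hy.le

theorem rowMinorsPos (hF : IsSLFrieze k n a) (h₁ : RowMinorsPos a k n 1) (i : ℤ) :
    RowMinorsPos a k n i :=
  Int.inductionOn' i 1 h₁ (fun _ _ => hF.rowMinorsPos_succ)
    fun _ _ h => hF.rowMinorsPos_of_succ (by rwa [sub_add_cancel])

theorem adjMinor_succ_eq_zero_of_mem_Icc (hF : IsSLFrieze k n a) (hk : 1 ≤ k) {i j : ℤ}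
    (hpos : RowMinorsPos a k n (i + 1)) (hj : j ∈ Set.Icc i (i + n + 1)) :
    adjMinor a (k + 1) i j = 0 := by
  obtain ⟨hj₁, hj₂⟩ := hj
  obtain ⟨t, rfl⟩ : ∃ t, k = t + 1 := ⟨k - 1, by omega⟩
  have key := adjMinor_succ_mul_adjMinor_succ (a := a) t i j
  simp only [hF.adjMinor_eq_one, mul_one, right_eq_add] at key
  have hB : 0 < adjMinor a t (i + 1) (j + 1) := by
    have := hpos t (j - i).toNat (by omega) (by omega)
    rwa [show i + 1 + ((j - i).toNat : ℤ) = j + 1 by omega] at this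
  exact (mul_eq_zero.mp key).resolve_right hB.ne'

theorem exists_vecMul_rowBlock_eq_zero (hF : IsSLFrieze k n a) (hk : 1 ≤ k)
    (hpos : ∀ i, RowMinorsPos a k n i) (i : ℤ) :
    ∃ lam ≠ 0, lam ᵥ* rowBlock a (k + 1) i = 0 := by
  obtain ⟨lam, hlam, hwin⟩ := exists_vecMul_rowBlock_eq_zero_on_Icc (c₀ := i) (c₁ := i + n + 1)
    (by omega) (fun j hj => hF.adjMinor_succ_eq_zero_of_mem_Icc hk (hpos _) hj)
    (fun j _ => by simp [hF.adjMinor_eq_one])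
  refine ⟨lam, hlam, funext fun c => ?_⟩
  have hper : Function.Periodic (fun c => (lam ᵥ* rowBlock a (k + 1) i) c = 0)
      ((n : ℤ) + k + 1) := by
    intro c
    have : (lam ᵥ* rowBlock a (k + 1) i) (c + ((n : ℤ) + k + 1)) =
        (-1) ^ (k - 1) * (lam ᵥ* rowBlock a (k + 1) i) c := by
      simp only [vecMul, dotProduct, rowBlock, of_apply, hF.apply_add_period, Finset.mul_sum]
      ring_nf
    simp [this]
  obtain ⟨y, hy, hcy⟩ := hper.exists_mem_Ico (by omega) c i
  exact hcy ▸ hwin y ⟨hy.1, by linarith [hy.2]⟩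

theorem adjMinor_succ_eq_zero (hF : IsSLFrieze k n a) (hk : 1 ≤ k)
    (hpos : ∀ i, RowMinorsPos a k n i) (i j : ℤ) : adjMinor a (k + 1) i j = 0 := by
  obtain ⟨lam, hlam, h⟩ := hF.exists_vecMul_rowBlock_eq_zero hk hpos i
  exact exists_vecMul_eq_zero_iff.mp ⟨lam, hlam, funext fun s => congrFun h (j + s)⟩

theorem windowSpan_eq (hF : IsSLFrieze k n a) (hk : 1 ≤ k) (hpos : ∀ i, RowMinorsPos a k n i)
    (i j : ℤ) : windowSpan ℝ a k i = windowSpan ℝ a k j := by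
  refine windowSpan_eq_of_forall_eq_succ (fun i => ?_) i j
  obtain ⟨lam, hlam, h⟩ := hF.exists_vecMul_rowBlock_eq_zero hk hpos i
  refine windowSpan_eq_succ_of_sum_eq_zero
    (head_ne_zero_of_vecMul_rowBlock_eq_zero (j := i + 1) (by simp [hF.adjMinor_eq_one]) hlam h)
    (last_ne_zero_of_vecMul_rowBlock_eq_zero (j := i) (by simp [hF.adjMinor_eq_one]) hlam h) ?_
  funext c
  simpa [vecMul, dotProduct, rowBlock] using congrFun h c

theorem apply_sub (hF : IsSLFrieze k n a) {d : ℕ} (hd : d < k) (i : ℤ) :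
    a i (i - d) = if d = 0 then 1 else 0 := by
  split_ifs with h
  · simpa [h] using hF.apply_self i
  · exact hF.apply_eq_zero_of_lt (by omega) (by omega)

theorem row_add_period (hF : IsSLFrieze k n a) (hk : 1 ≤ k) (hpos : ∀ i, RowMinorsPos a k n i)
    (i : ℤ) : a (i + ((n : ℤ) + k + 1)) = (-1 : ℝ) ^ (k - 1) • a i := by
  set N : ℤ := (n : ℤ) + k + 1
  set b : ℤ := i + N - (k - 1 : ℕ)
  rw [← sub_eq_zero]
  refine eq_zero_of_mem_windowSpan (a := a) (k := k) (i := b) (j := b)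
    (by simp [hF.adjMinor_eq_one]) ?_ fun s => ?_
  · refine sub_mem ?_ (smul_mem _ _ ?_)
    · simpa [b] using mem_windowSpan a (m := k - 1) (by omega) b
    · rw [← hF.windowSpan_eq hk hpos i b]
      simpa using mem_windowSpan a (m := 0) (by omega) i
  · have h₁ := hF.apply_sub (d := k - 1 - s) (by omega) (i + N)
    have h₂ := hF.apply_sub (d := k - 1 - s) (by omega) i
    have h₃ := hF.apply_add_period i (i - (k - 1 - s : ℕ))
    rw [Pi.sub_apply, Pi.smul_apply, smul_eq_mul, show b + s = i + N - (k - 1 - s : ℕ) by omega,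
      h₁, show i + N - (k - 1 - s : ℕ) = i - (k - 1 - s : ℕ) + N by ring, h₃, h₂, ← mul_assoc,
      neg_one_pow_mul_self, one_mul, sub_self]

end IsSLFrieze

theorem positivity_propagates_general (k n : ℕ) (hk : 2 ≤ k) (a : ℤ → ℤ → ℝ)
    (hone : ∀ i : ℤ, a i i = 1)
    (hone' : ∀ i : ℤ, a i (i + ((n : ℤ) + 1)) = 1)
    (hzero : ∀ i j : ℤ, i + ((n : ℤ) + 1) < j → j < i + ((n : ℤ) + (k : ℤ) + 1) → a i j = 0)
    (hext : ∀ i j : ℤ, a i (j + ((n : ℤ) + (k : ℤ) + 1)) = (-1 : ℝ) ^ (k - 1) * a i j)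
    (hSL : ∀ i j : ℤ, adjMinor a k i j = 1)
    (hpos : ∀ ℓ j : ℕ, 1 ≤ ℓ → ℓ ≤ k - 1 → 1 ≤ j → j ≤ n →
      0 < adjMinor a ℓ 1 (1 + (j : ℤ))) :
    (∀ (i : ℤ) (ℓ j : ℕ), 1 ≤ ℓ → ℓ ≤ k - 1 → 1 ≤ j → j ≤ n →
      0 < adjMinor a ℓ i (i + (j : ℤ))) ∧
    (∀ i j : ℤ, adjMinor a (k + 1) i j = 0) ∧
    (∀ i j : ℤ, a (i + ((n : ℤ) + (k : ℤ) + 1)) (j + ((n : ℤ) + (k : ℤ) + 1)) = a i j) := by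
  have hF : IsSLFrieze k n a := ⟨hone, hone', hzero, hext, hSL⟩
  have hrows : ∀ i, RowMinorsPos a k n i := hF.rowMinorsPos (hF.rowMinorsPos_of_interior hpos)
  refine ⟨fun i ℓ j _ hℓ _ hj => hrows i ℓ j (by omega) (by omega),
    hF.adjMinor_succ_eq_zero (by omega) hrows, fun i j => ?_⟩
  rw [hF.row_add_period (by omega) hrows, Pi.smul_apply, smul_eq_mul, hext, ← mul_assoc,
    neg_one_pow_mul_self, one_mul]

/-- Let `F = (a i j)` be an SL_k-frieze of height `n` over ℝ: in the coordinates
used here, row `i` has a `1` at columns `i` and `i + n + 1`, interior entries at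
columns `i+1, …, i+n`, zeros at the `k-1` following columns, and the rows are
extended with period `n+k+1` and sign `(-1)^{k-1}`; all adjacent `k×k` minors are `1`.
If `D_{1,j}^ℓ > 0` for `ℓ = 1,…,k-1` and `j = 1,…,n`, then `D_{i,·}^ℓ > 0` at all
interior positions of all rows; in particular `F` is generic, hence tame
(all adjacent `(k+1)×(k+1)` minors vanish) and periodic with period `n+k+1`. -/
theorem positivity_propagates (k n : ℕ) (hk : 2 ≤ k) (hn : 1 ≤ n) (a : ℤ → ℤ → ℝ)
    (hone : ∀ i : ℤ, a i i = 1)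
    (hone' : ∀ i : ℤ, a i (i + ((n : ℤ) + 1)) = 1)
    (hzero : ∀ i j : ℤ, i + ((n : ℤ) + 1) < j → j < i + ((n : ℤ) + (k : ℤ) + 1) → a i j = 0)
    (hext : ∀ i j : ℤ, a i (j + ((n : ℤ) + (k : ℤ) + 1)) = (-1 : ℝ) ^ (k - 1) * a i j)
    (hSL : ∀ i j : ℤ, adjMinor a k i j = 1)
    (hpos : ∀ ℓ j : ℕ, 1 ≤ ℓ → ℓ ≤ k - 1 → 1 ≤ j → j ≤ n →
      0 < adjMinor a ℓ 1 (1 + (j : ℤ))) :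
    (∀ (i : ℤ) (ℓ j : ℕ), 1 ≤ ℓ → ℓ ≤ k - 1 → 1 ≤ j → j ≤ n →
      0 < adjMinor a ℓ i (i + (j : ℤ))) ∧
    (∀ i j : ℤ, adjMinor a (k + 1) i j = 0) ∧
    (∀ i j : ℤ, a (i + ((n : ℤ) + (k : ℤ) + 1)) (j + ((n : ℤ) + (k : ℤ) + 1)) = a i j) :=
  positivity_propagates_general k n hk a hone hone' hzero hext hSL hpos
end
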